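/- For every n ∈ ℕ, every LTL formula φ in the class 𝕏ⁿ (nesting depth of X at most n), and all infinite traces τ and τ' with τ ≈ₙ τ' (n-stutter equivalent): τ ⊨ φ if and only if τ' ⊨ φ. -/

import Mathlib

/-- LTL formulas over an alphabet `A`. -/
inductive LTL (A : Type) : Type where
  | atom : A → LTL A
  | not  : LTL A → LTL A
  | or   : LTL A → LTL A → LTL A
  | next : LTL A → LTL A
  | untl : LTL A → LTL A → LTL A

/-- LTL satisfaction over an infinite trace. -/
def LTL.Sat {A : Type} : (ℕ → A → Bool) → LTL A → Prop
  | τ, .atom a   => τ 0 a = true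
  | τ, .not φ    => ¬ LTL.Sat τ φ
  | τ, .or φ ψ   => LTL.Sat τ φ ∨ LTL.Sat τ ψ
  | τ, .next φ   => LTL.Sat (fun n => τ (n + 1)) φ
  | τ, .untl φ ψ => ∃ j, LTL.Sat (fun n => τ (n + j)) ψ ∧
      ∀ j' < j, LTL.Sat (fun n => τ (n + j')) φ

/-- Nesting depth of the `X` (next) operator of an LTL formula. -/
def LTL.xDepth {A : Type} : LTL A → ℕ
  | .atom _   => 0
  | .not φ    => φ.xDepth
  | .or φ ψ   => max φ.xDepth ψ.xDepth
  | .next φ   => φ.xDepth + 1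
  | .untl φ ψ => max φ.xDepth ψ.xDepth

/-- The valuation at position `i` of `τ` is `n`-redundant: it is repeated for the next
`n+1` positions. -/
def Redundant {A : Type} (n : ℕ) (τ : ℕ → A → Bool) (i : ℕ) : Prop :=
  ∀ j, 1 ≤ j → j ≤ n + 1 → τ i = τ (i + j)

/-- Deletion of the valuation at position `i` of an infinite trace. -/
def deleteAt {A : Type} (τ : ℕ → A → Bool) (i : ℕ) : ℕ → A → Bool :=
  fun m => if m < i then τ m else τ (m + 1)

/-- `τ ≺ₙ τ'`: `τ` is obtained from `τ'` by deleting one `n`-redundant valuation. -/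
def StutterStep {A : Type} (n : ℕ) (τ τ' : ℕ → A → Bool) : Prop :=
  ∃ i, Redundant n τ' i ∧ τ = deleteAt τ' i

/-- `n`-stutter equivalence `≈ₙ`: the least equivalence relation containing `≺ₙ`. -/
def NStutterEquiv {A : Type} (n : ℕ) : (ℕ → A → Bool) → (ℕ → A → Bool) → Prop :=
  Relation.EqvGen (StutterStep n)

/-!
Deleting an `n`-redundant valuation is invisible to formulas of `X`-depth at most `n`, by
induction on the formula. Each `X` consumes one of the `n + 1` repetitions. For `φ U ψ`, the
suffixes of the shortened trace are, up to the induction hypothesis, the suffixes of the original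
trace with the one at the deleted position `i` skipped; and by induction the suffixes at `i` and
`i + 1` agree on `φ` and `ψ`, which is all an until condition can notice.
-/

def Nat.succAbove (i k : ℕ) : ℕ := if k < i then k else k + 1

theorem Nat.exists_until_succAbove_iff {P Q : ℕ → Prop} {i : ℕ}
    (hP : P i ↔ P (i + 1)) (hQ : Q i ↔ Q (i + 1)) :
    (∃ j, Q (i.succAbove j) ∧ ∀ j' < j, P (i.succAbove j')) ↔ ∃ j, Q j ∧ ∀ j' < j, P j' := by
  have hlt {k} (hk : k < i) : i.succAbove k = k := if_pos hk
  have hge {k} (hk : i ≤ k) : i.succAbove k = k + 1 := if_neg (Nat.not_lt.mpr hk)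
  constructor
  · rintro ⟨j, hQj, hPj⟩
    rcases Nat.lt_trichotomy j i with hji | rfl | hij
    · exact ⟨j, hlt hji ▸ hQj, fun j' hj' => hlt (hj'.trans hji) ▸ hPj j' hj'⟩
    · exact ⟨j, hQ.mpr (hge le_rfl ▸ hQj), fun j' hj' => hlt hj' ▸ hPj j' hj'⟩
    · refine ⟨j + 1, hge hij.le ▸ hQj, fun j' hj' => ?_⟩
      rcases Nat.lt_trichotomy j' i with hj'i | rfl | hij'
      · exact hlt hj'i ▸ hPj j' (by omega)
      · exact hP.mpr (hge le_rfl ▸ hPj j' hij)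
      · have := hPj (j' - 1) (by omega)
        rwa [hge (by omega), Nat.sub_add_cancel (by omega)] at this
  · rintro ⟨j, hQj, hPj⟩
    rcases Nat.lt_trichotomy j i with hji | rfl | hij
    · exact ⟨j, (hlt hji).symm ▸ hQj, fun j' hj' => (hlt (hj'.trans hji)).symm ▸ hPj j' hj'⟩
    · exact ⟨j, (hge le_rfl).symm ▸ hQ.mp hQj, fun j' hj' => (hlt hj').symm ▸ hPj j' hj'⟩
    · refine ⟨j - 1, ?_, fun j' hj' => ?_⟩
      · rwa [hge (by omega), Nat.sub_add_cancel (by omega)]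
      · rcases Nat.lt_or_ge j' i with hj'i | hij'
        · exact (hlt hj'i).symm ▸ hPj j' (by omega)
        · exact (hge hij').symm ▸ hPj (j' + 1) (by omega)

section Deletion

variable {A : Type} {n : ℕ} {τ : ℕ → A → Bool} {i : ℕ}

theorem deleteAt_shift (k : ℕ) :
    (fun m => deleteAt τ (i + k) (m + k)) = deleteAt (fun m => τ (m + k)) i := by
  funext m
  simp only [deleteAt, Nat.add_lt_add_iff_right, Nat.add_right_comm]

theorem deleteAt_shift_of_le {k : ℕ} (h : i ≤ k) :
    (fun m => deleteAt τ i (m + k)) = fun m => τ (m + (k + 1)) := by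
  funext m
  simp only [deleteAt, if_neg (show ¬m + k < i by omega), Nat.add_assoc]

theorem deleteAt_eq_deleteAt_succ (h : τ i = τ (i + 1)) : deleteAt τ i = deleteAt τ (i + 1) := by
  funext m
  simp only [deleteAt]
  rcases Nat.lt_trichotomy m i with hm | rfl | hm
  · rw [if_pos hm, if_pos (by omega)]
  · rw [if_neg (Nat.lt_irrefl m), if_pos (Nat.lt_succ_self m), h]
  · rw [if_neg (by omega), if_neg (by omega)]

namespace Redundant

theorem eq_succ (hr : Redundant n τ i) : τ i = τ (i + 1) :=
  hr 1 le_rfl (by omega)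

theorem succ (hr : Redundant (n + 1) τ i) : Redundant n τ (i + 1) := fun j hj1 hj2 => by
  rw [← hr.eq_succ, Nat.add_assoc, Nat.add_comm 1 j]
  exact hr (j + 1) (by omega) (by omega)

theorem shift {k : ℕ} (hr : Redundant n τ (i + k)) : Redundant n (fun m => τ (m + k)) i :=
  fun j hj1 hj2 => by
    simpa only [Nat.add_right_comm i j k] using hr j hj1 hj2

end Redundant

end Deletion

namespace LTL

variable {A : Type} {n : ℕ}

def DeletionInvariant (n : ℕ) (φ : LTL A) : Prop :=
  ∀ ⦃τ : ℕ → A → Bool⦄ ⦃i : ℕ⦄, Redundant n τ i → (Sat (deleteAt τ i) φ ↔ Sat τ φ)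

namespace DeletionInvariant

variable {φ ψ : LTL A}

theorem atom (a : A) : DeletionInvariant n (.atom a) := fun τ i hr => by
  rw [deleteAt_eq_deleteAt_succ hr.eq_succ]
  simp only [Sat, deleteAt, if_pos (Nat.succ_pos i)]

theorem not (h : DeletionInvariant n φ) : DeletionInvariant n (.not φ) :=
  fun _ _ hr => not_congr (h hr)

theorem or (hφ : DeletionInvariant n φ) (hψ : DeletionInvariant n ψ) :
    DeletionInvariant n (.or φ ψ) :=
  fun _ _ hr => or_congr (hφ hr) (hψ hr)

/-- Deleting either copy of a repeated valuation gives the same trace, so we may delete the later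
one, which survives the shift by one position with one repetition fewer. -/
theorem next (h : DeletionInvariant n φ) : DeletionInvariant (n + 1) (.next φ) := fun τ i hr => by
  change Sat (fun m => deleteAt τ i (m + 1)) φ ↔ Sat (fun m => τ (m + 1)) φ
  rw [deleteAt_eq_deleteAt_succ hr.eq_succ, deleteAt_shift]
  exact h hr.succ.shift

theorem sat_shift_deleteAt_iff (h : DeletionInvariant n φ) {τ : ℕ → A → Bool} {i : ℕ}
    (hr : Redundant n τ i) (k : ℕ) :
    Sat (fun m => deleteAt τ i (m + k)) φ ↔ Sat (fun m => τ (m + i.succAbove k)) φ := by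
  unfold Nat.succAbove
  split_ifs with hk
  · obtain ⟨d, rfl⟩ := Nat.exists_eq_add_of_le' hk.le
    rw [deleteAt_shift]
    exact h hr.shift
  · rw [deleteAt_shift_of_le (Nat.not_lt.mp hk)]

theorem sat_shift_succ_iff (h : DeletionInvariant n φ) {τ : ℕ → A → Bool} {i : ℕ}
    (hr : Redundant n τ i) :
    Sat (fun m => τ (m + i)) φ ↔ Sat (fun m => τ (m + (i + 1))) φ := by
  have hdel : deleteAt (fun m => τ (m + i)) 0 = fun m => τ (m + (i + 1)) := by
    funext m
    change τ (m + 1 + i) = τ (m + (i + 1))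
    rw [Nat.add_right_comm, Nat.add_assoc]
  rw [← hdel]
  exact (h (Redundant.shift (by rwa [Nat.zero_add]))).symm

theorem untl (hφ : DeletionInvariant n φ) (hψ : DeletionInvariant n ψ) :
    DeletionInvariant n (.untl φ ψ) := fun τ i hr => by
  simp only [Sat, hφ.sat_shift_deleteAt_iff hr, hψ.sat_shift_deleteAt_iff hr]
  exact Nat.exists_until_succAbove_iff (P := fun k => Sat (fun m => τ (m + k)) φ)
    (Q := fun k => Sat (fun m => τ (m + k)) ψ) (hφ.sat_shift_succ_iff hr) (hψ.sat_shift_succ_iff hr)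

end DeletionInvariant

theorem deletionInvariant_of_xDepth_le {φ : LTL A} (hφ : φ.xDepth ≤ n) :
    DeletionInvariant n φ := by
  induction φ generalizing n with
  | atom a => exact .atom a
  | not φ ih => exact (ih hφ).not
  | or φ ψ ihφ ihψ => exact (ihφ (le_of_max_le_left hφ)).or (ihψ (le_of_max_le_right hφ))
  | next φ ih =>
    obtain ⟨m, rfl⟩ := Nat.exists_eq_add_of_le' (le_add_self.trans hφ)
    exact (ih (Nat.le_of_add_le_add_right hφ)).next
  | untl φ ψ ihφ ihψ => exact (ihφ (le_of_max_le_left hφ)).untl (ihψ (le_of_max_le_right hφ))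

end LTL

theorem nStutterEquiv_preserves_Xn_general
    {A : Type} (n : ℕ) (φ : LTL A) (hφ : φ.xDepth ≤ n)
    (τ τ' : ℕ → A → Bool) (h : NStutterEquiv n τ τ') :
    LTL.Sat τ φ ↔ LTL.Sat τ' φ := by
  have hIff : Equivalence fun σ σ' : ℕ → A → Bool => (LTL.Sat σ φ ↔ LTL.Sat σ' φ) :=
    ⟨fun _ => Iff.rfl, Iff.symm, Iff.trans⟩
  refine hIff.eqvGen_iff.mp (Relation.EqvGen.mono ?_ τ τ' h)
  rintro _ σ ⟨i, hr, rfl⟩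
  exact LTL.deletionInvariant_of_xDepth_le hφ hr

/-- For every `n ∈ ℕ`, every LTL formula `φ` in the class `𝕏ⁿ`
(nesting depth of the next operator at most `n`), and all infinite traces `τ ≈ₙ τ'`
(`n`-stutter equivalent): `τ ⊨ φ` iff `τ' ⊨ φ`. -/
theorem nStutterEquiv_preserves_Xn
    {A : Type} [Finite A] (n : ℕ) (φ : LTL A) (hφ : φ.xDepth ≤ n)
    (τ τ' : ℕ → A → Bool) (h : NStutterEquiv n τ τ') :
    LTL.Sat τ φ ↔ LTL.Sat τ' φ :=
  nStutterEquiv_preserves_Xn_general n φ hφ τ τ' h
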